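/- arXiv:1706.06095 — 3 statements merged into one kernel-verified Lean document; each statement's English description precedes it below -/
import Mathlib

section
/- Let n ≥ 1 and let A_1, …, A_{n−1} ⊆ ℝ be closed sets with A_i ∩ [a, a+1] ≠ ∅ for every a ∈ ℝ, and define L_h, R_h as in the recursion. Then for every i ∈ {1, …, n}: (a) L_i and R_i are nondecreasing functions of x; (b) R_i(x) − L_i(x) ≥ 1 for all x ∈ ℝ; (c) L_i(x) → +∞ and R_i(x) → +∞ as x → +∞; (d) L_i(x) → −∞ and R_i(x) → −∞ as x → −∞. -/
/-- The left endpoints `L_h(x)` of the intervals `J_h(x)`: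
`L 1 x = x` and `L (i+1) x = x + min {a ∈ A i : a ≥ L i x}`. -/
noncomputable def Lfun (A : ℕ → Set ℝ) : ℕ → ℝ → ℝ
  | 0, x => x
  | 1, x => x
  | (i + 2), x => x + sInf {a : ℝ | a ∈ A (i + 1) ∧ Lfun A (i + 1) x ≤ a}

/-- The right endpoints `R_h(x)` of the intervals `J_h(x)`:
`R 1 x = x + 1` and `R (i+1) x = x + 1 + max {a ∈ A i : a ≤ R i x}`. -/
noncomputable def Rfun (A : ℕ → Set ℝ) : ℕ → ℝ → ℝ
  | 0, x => x + 1
  | 1, x => x + 1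
  | (i + 2), x => x + 1 + sSup {a : ℝ | a ∈ A (i + 1) ∧ a ≤ Rfun A (i + 1) x}

/-!
Each step adds to `x` the first point of `A_i` at or above `L_i(x)`, resp. `1` plus the last point
of `A_i` at or below `R_i(x)`. As `A_i` meets every unit interval, these points lie in
`[L_i(x), L_i(x) + 1]` and `[R_i(x) - 1, R_i(x)]`, so `L_{i+1}(x)` and `R_{i+1}(x)` are within `1`
of `x + L_i(x)` and `x + R_i(x)`, which propagates the limits. Both points move monotonically with
`L_i(x)` and `R_i(x)`, and when `R_i(x) - L_i(x) ≥ 1` the point of `A_i` in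
`[L_i(x), L_i(x) + 1]` is at most `R_i(x)`, so the first point does not exceed the last one.
-/

open Filter Set

theorem Nat.le_induction_bounded {n : ℕ} {P : ℕ → Prop} (base : P 1)
    (succ : ∀ k, 1 ≤ k → k < n → P k → P (k + 1)) :
    ∀ i, 1 ≤ i → i ≤ n → P i := by
  intro i hi
  induction i, hi using Nat.le_induction with
  | base => exact fun _ => base
  | succ k hk ih =>
    exact fun hkn => succ k hk (Nat.lt_of_succ_le hkn) (ih (Nat.le_of_succ_le hkn))

def MeetsUnitIntervals (s : Set ℝ) : Prop :=
  ∀ a : ℝ, (s ∩ Icc a (a + 1)).Nonempty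

noncomputable def firstAtLeast (s : Set ℝ) (l : ℝ) : ℝ :=
  sInf {a : ℝ | a ∈ s ∧ l ≤ a}

noncomputable def lastAtMost (s : Set ℝ) (r : ℝ) : ℝ :=
  sSup {a : ℝ | a ∈ s ∧ a ≤ r}

namespace MeetsUnitIntervals

variable {s : Set ℝ} (hs : MeetsUnitIntervals s)
include hs

theorem exists_mem_ge_le_add_one (l : ℝ) :
    ∃ a ∈ {a : ℝ | a ∈ s ∧ l ≤ a}, a ≤ l + 1 := by
  obtain ⟨a, has, hla, hal⟩ := hs l
  exact ⟨a, ⟨has, hla⟩, hal⟩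

theorem exists_mem_le_sub_one_le (r : ℝ) :
    ∃ a ∈ {a : ℝ | a ∈ s ∧ a ≤ r}, r - 1 ≤ a := by
  obtain ⟨a, has, hla, hal⟩ := hs (r - 1)
  exact ⟨a, ⟨has, by linarith⟩, hla⟩

theorem le_firstAtLeast (l : ℝ) : l ≤ firstAtLeast s l :=
  le_csInf ((hs.exists_mem_ge_le_add_one l).imp fun _ => And.left) fun _ ha => ha.2

theorem firstAtLeast_le_add_one (l : ℝ) : firstAtLeast s l ≤ l + 1 := by
  obtain ⟨a, ha, hal⟩ := hs.exists_mem_ge_le_add_one l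
  exact (csInf_le ⟨l, fun _ hb => hb.2⟩ ha).trans hal

theorem lastAtMost_le (r : ℝ) : lastAtMost s r ≤ r :=
  csSup_le ((hs.exists_mem_le_sub_one_le r).imp fun _ => And.left) fun _ ha => ha.2

theorem sub_one_le_lastAtMost (r : ℝ) : r - 1 ≤ lastAtMost s r := by
  obtain ⟨a, ha, hra⟩ := hs.exists_mem_le_sub_one_le r
  exact hra.trans (le_csSup ⟨r, fun _ hb => hb.2⟩ ha)

theorem monotone_firstAtLeast : Monotone (firstAtLeast s) := fun l l' hll' =>
  csInf_le_csInf ⟨l, fun _ hb => hb.2⟩ ((hs.exists_mem_ge_le_add_one l').imp fun _ => And.left)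
    fun _ ha => ⟨ha.1, hll'.trans ha.2⟩

theorem monotone_lastAtMost : Monotone (lastAtMost s) := fun r r' hrr' =>
  csSup_le_csSup ⟨r', fun _ hb => hb.2⟩ ((hs.exists_mem_le_sub_one_le r).imp fun _ => And.left)
    fun _ ha => ⟨ha.1, ha.2.trans hrr'⟩

theorem firstAtLeast_le_lastAtMost {l r : ℝ} (h : l + 1 ≤ r) :
    firstAtLeast s l ≤ lastAtMost s r := by
  obtain ⟨a, ha, hal⟩ := hs.exists_mem_ge_le_add_one l
  exact (csInf_le ⟨l, fun _ hb => hb.2⟩ ha).trans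
    (le_csSup ⟨r, fun _ hb => hb.2⟩ ⟨ha.1, hal.trans h⟩)

end MeetsUnitIntervals

theorem Lfun_one (A : ℕ → Set ℝ) : Lfun A 1 = id := rfl

theorem Rfun_one (A : ℕ → Set ℝ) : Rfun A 1 = fun x => x + 1 := rfl

theorem Lfun_succ (A : ℕ → Set ℝ) {k : ℕ} (hk : 1 ≤ k) (x : ℝ) :
    Lfun A (k + 1) x = x + firstAtLeast (A k) (Lfun A k x) := by
  obtain ⟨m, rfl⟩ := Nat.exists_eq_add_of_le' hk
  rfl

theorem Rfun_succ (A : ℕ → Set ℝ) {k : ℕ} (hk : 1 ≤ k) (x : ℝ) :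
    Rfun A (k + 1) x = x + 1 + lastAtMost (A k) (Rfun A k x) := by
  obtain ⟨m, rfl⟩ := Nat.exists_eq_add_of_le' hk
  rfl

section Recursion

variable {n : ℕ} {A : ℕ → Set ℝ}
  (hA : ∀ k, 1 ≤ k → k < n → MeetsUnitIntervals (A k))
include hA

theorem monotone_Lfun : ∀ i, 1 ≤ i → i ≤ n → Monotone (Lfun A i) := by
  refine Nat.le_induction_bounded monotone_id fun k hk hkn ih x y hxy => ?_
  rw [Lfun_succ A hk, Lfun_succ A hk]
  exact add_le_add hxy ((hA k hk hkn).monotone_firstAtLeast (ih hxy))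

theorem monotone_Rfun : ∀ i, 1 ≤ i → i ≤ n → Monotone (Rfun A i) := by
  refine Nat.le_induction_bounded (monotone_id.add_const 1) fun k hk hkn ih x y hxy => ?_
  rw [Rfun_succ A hk, Rfun_succ A hk]
  exact add_le_add (by linarith) ((hA k hk hkn).monotone_lastAtMost (ih hxy))

theorem one_le_Rfun_sub_Lfun :
    ∀ i, 1 ≤ i → i ≤ n → ∀ x, 1 ≤ Rfun A i x - Lfun A i x := by
  refine Nat.le_induction_bounded (fun x => by simp [Lfun_one, Rfun_one])
    fun k hk hkn ih x => ?_
  rw [Lfun_succ A hk, Rfun_succ A hk]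
  have hgap : Lfun A k x + 1 ≤ Rfun A k x := by linarith [ih x]
  linarith [(hA k hk hkn).firstAtLeast_le_lastAtMost hgap]

theorem tendsto_Lfun_atTop : ∀ i, 1 ≤ i → i ≤ n → Tendsto (Lfun A i) atTop atTop := by
  refine Nat.le_induction_bounded tendsto_id fun k hk hkn ih => ?_
  refine tendsto_atTop_mono (fun x => ?_) (tendsto_id.atTop_add_atTop ih)
  rw [Lfun_succ A hk, id_eq]
  linarith [(hA k hk hkn).le_firstAtLeast (Lfun A k x)]

theorem tendsto_Rfun_atTop : ∀ i, 1 ≤ i → i ≤ n → Tendsto (Rfun A i) atTop atTop := by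
  refine Nat.le_induction_bounded (tendsto_atTop_add_const_right _ 1 tendsto_id)
    fun k hk hkn ih => ?_
  refine tendsto_atTop_mono (fun x => ?_) (tendsto_id.atTop_add_atTop ih)
  rw [Rfun_succ A hk, id_eq]
  linarith [(hA k hk hkn).sub_one_le_lastAtMost (Rfun A k x)]

theorem tendsto_Lfun_atBot : ∀ i, 1 ≤ i → i ≤ n → Tendsto (Lfun A i) atBot atBot := by
  refine Nat.le_induction_bounded tendsto_id fun k hk hkn ih => ?_
  refine tendsto_atBot_mono (fun x => ?_)
    (tendsto_atBot_add_const_right _ 1 (tendsto_id.atBot_add_atBot ih))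
  rw [Lfun_succ A hk, id_eq]
  linarith [(hA k hk hkn).firstAtLeast_le_add_one (Lfun A k x)]

theorem tendsto_Rfun_atBot : ∀ i, 1 ≤ i → i ≤ n → Tendsto (Rfun A i) atBot atBot := by
  refine Nat.le_induction_bounded (tendsto_atBot_add_const_right _ 1 tendsto_id)
    fun k hk hkn ih => ?_
  refine tendsto_atBot_mono (fun x => ?_)
    (tendsto_atBot_add_const_right _ 1 (tendsto_id.atBot_add_atBot ih))
  rw [Rfun_succ A hk, id_eq]
  linarith [(hA k hk hkn).lastAtMost_le (Rfun A k x)]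

end Recursion

theorem LR_basic_properties_general (n : ℕ) (A : ℕ → Set ℝ)
    (hdense : ∀ i, 1 ≤ i → i < n → ∀ a : ℝ, (A i ∩ Set.Icc a (a + 1)).Nonempty) :
    ∀ i, 1 ≤ i → i ≤ n →
      Monotone (Lfun A i) ∧ Monotone (Rfun A i) ∧
      (∀ x : ℝ, 1 ≤ Rfun A i x - Lfun A i x) ∧
      Filter.Tendsto (Lfun A i) Filter.atTop Filter.atTop ∧
      Filter.Tendsto (Rfun A i) Filter.atTop Filter.atTop ∧
      Filter.Tendsto (Lfun A i) Filter.atBot Filter.atBot ∧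
      Filter.Tendsto (Rfun A i) Filter.atBot Filter.atBot := fun i h1i hin =>
  ⟨monotone_Lfun hdense i h1i hin, monotone_Rfun hdense i h1i hin,
    one_le_Rfun_sub_Lfun hdense i h1i hin, tendsto_Lfun_atTop hdense i h1i hin,
    tendsto_Rfun_atTop hdense i h1i hin, tendsto_Lfun_atBot hdense i h1i hin,
    tendsto_Rfun_atBot hdense i h1i hin⟩

/-- Basic properties of `L_i` and `R_i` for `i ∈ {1,…,n}`:
(a) both are nondecreasing; (b) `R_i(x) − L_i(x) ≥ 1`;
(c) both tend to `+∞` as `x → +∞`; (d) both tend to `−∞` as `x → −∞`. -/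
theorem LR_basic_properties (n : ℕ) (hn : 1 ≤ n) (A : ℕ → Set ℝ)
    (hclosed : ∀ i, 1 ≤ i → i < n → IsClosed (A i))
    (hdense : ∀ i, 1 ≤ i → i < n → ∀ a : ℝ, (A i ∩ Set.Icc a (a + 1)).Nonempty) :
    ∀ i, 1 ≤ i → i ≤ n →
      Monotone (Lfun A i) ∧ Monotone (Rfun A i) ∧
      (∀ x : ℝ, 1 ≤ Rfun A i x - Lfun A i x) ∧
      Filter.Tendsto (Lfun A i) Filter.atTop Filter.atTop ∧
      Filter.Tendsto (Rfun A i) Filter.atTop Filter.atTop ∧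
      Filter.Tendsto (Lfun A i) Filter.atBot Filter.atBot ∧
      Filter.Tendsto (Rfun A i) Filter.atBot Filter.atBot :=
  LR_basic_properties_general n A hdense
end

section
/- Let n ≥ 1 and let A_1, …, A_{n−1} ⊆ ℝ be closed sets with A_i ∩ [a, a+1] ≠ ∅ for every a ∈ ℝ, and define L_h, R_h as in the recursion. Then for every i ∈ {1, …, n}, the function L_i is left continuous and the function R_i is right continuous. -/
/-!
Each step applies to `L_i x` the map `t ↦ min (A ∩ [t, ∞))`, which is monotone and left
continuous for closed `A`: at a point of `A` it is squeezed between `t` and the point itself,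
and off `A` it is locally constant on the left. A composition of monotone left-continuous maps
is left continuous, so induction gives the claim for `L`. Reflecting `x ↦ -x - 1` turns the
recursion for `R` built on `A` into the one for `L` built on `-A`, which gives the claim for `R`.
-/

open Set Filter Topology

/-- The paper's `min {a ∈ A : a ≥ t}`, named after `ceilIn ℤ t = ⌈t⌉`. -/
noncomputable def ceilIn (A : Set ℝ) (t : ℝ) : ℝ := sInf (A ∩ Ici t)

section ceilIn

variable {A : Set ℝ}

lemma ceilIn_mono (hA : ¬BddAbove A) : Monotone (ceilIn A) := by
  intro s t hst
  obtain ⟨a, ha, hta⟩ := not_bddAbove_iff.1 hA t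
  exact csInf_le_csInf ⟨s, fun _ hb => hb.2⟩ ⟨a, ha, hta.le⟩
    (inter_subset_inter_right A (Ici_subset_Ici.2 hst))

lemma ceilIn_continuousWithinAt_Iic (hA : IsClosed A) (t₀ : ℝ) :
    ContinuousWithinAt (ceilIn A) (Iic t₀) t₀ := by
  by_cases ht₀ : t₀ ∈ A
  · have hself : ceilIn A t₀ = t₀ :=
      le_antisymm (csInf_le ⟨t₀, fun _ hb => hb.2⟩ ⟨ht₀, mem_Ici.2 le_rfl⟩)
        (le_csInf ⟨t₀, ht₀, mem_Ici.2 le_rfl⟩ fun _ hb => hb.2)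
    have hsqueeze : ∀ t ∈ Iic t₀, t ≤ ceilIn A t ∧ ceilIn A t ≤ t₀ := fun t ht =>
      ⟨le_csInf ⟨t₀, ht₀, ht⟩ fun _ hb => hb.2, csInf_le ⟨t, fun _ hb => hb.2⟩ ⟨ht₀, ht⟩⟩
    rw [ContinuousWithinAt, hself]
    exact tendsto_of_tendsto_of_tendsto_of_le_of_le'
      (tendsto_nhdsWithin_of_tendsto_nhds tendsto_id) tendsto_const_nhds
      (eventually_nhdsWithin_of_forall fun t ht => (hsqueeze t ht).1)
      (eventually_nhdsWithin_of_forall fun t ht => (hsqueeze t ht).2)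
  · obtain ⟨l, hl, hgap⟩ :=
      exists_Ioc_subset_of_mem_nhds (hA.isOpen_compl.mem_nhds ht₀) ⟨t₀ - 1, by linarith⟩
    have hconst : ∀ t ∈ Ioc l t₀, ceilIn A t = ceilIn A t₀ := by
      rintro t ⟨hlt, htt₀⟩
      refine congrArg sInf (Set.ext fun a => ⟨fun ⟨ha, hta⟩ => ⟨ha, ?_⟩,
        fun ⟨ha, hta⟩ => ⟨ha, htt₀.trans hta⟩⟩)
      show t₀ ≤ a
      by_contra! hat₀
      exact hgap ⟨hlt.trans_le hta, hat₀.le⟩ ha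
    exact continuousWithinAt_const.congr_of_eventuallyEq
      (eventually_of_mem (Ioc_mem_nhdsLE hl) hconst) (hconst t₀ ⟨hl, le_rfl⟩)

end ceilIn

lemma not_bddAbove_and_not_bddBelow_of_inter_Icc_nonempty {A : Set ℝ}
    (hA : ∀ a : ℝ, (A ∩ Icc a (a + 1)).Nonempty) : ¬BddAbove A ∧ ¬BddBelow A := by
  constructor
  · rintro ⟨M, hM⟩
    obtain ⟨a, ha, hMa, -⟩ := hA (M + 1)
    linarith [hM ha]
  · rintro ⟨M, hM⟩
    obtain ⟨a, ha, -, haM⟩ := hA (M - 2)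
    linarith [hM ha]

lemma Lfun_add_two (A : ℕ → Set ℝ) (i : ℕ) (x : ℝ) :
    Lfun A (i + 2) x = x + ceilIn (A (i + 1)) (Lfun A (i + 1) x) :=
  rfl

lemma Lfun_monotone_and_continuousWithinAt_Iic {n : ℕ} {A : ℕ → Set ℝ}
    (hclosed : ∀ i, 1 ≤ i → i < n → IsClosed (A i))
    (hunbdd : ∀ i, 1 ≤ i → i < n → ¬BddAbove (A i)) :
    ∀ i ≤ n, Monotone (Lfun A i) ∧ ∀ x, ContinuousWithinAt (Lfun A i) (Iic x) x := by
  intro i hi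
  induction i with
  | zero => exact ⟨monotone_id, fun _ => continuousWithinAt_id⟩
  | succ i ih =>
    cases i with
    | zero => exact ⟨monotone_id, fun _ => continuousWithinAt_id⟩
    | succ j =>
      obtain ⟨hmono, hcont⟩ := ih (by omega)
      have hceil_mono := ceilIn_mono (hunbdd (j + 1) (by omega) (by omega))
      have hceil_cont := ceilIn_continuousWithinAt_Iic (hclosed (j + 1) (by omega) (by omega))
      refine ⟨fun x y hxy => ?_, fun x => ?_⟩
      · simp only [Lfun_add_two]
        exact add_le_add hxy (hceil_mono (hmono hxy))
      · simp only [funext (Lfun_add_two A j)]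
        exact continuousWithinAt_id.add
          ((hceil_cont _).comp (hcont x) fun y hy => hmono hy)

lemma Rfun_eq_neg_Lfun_neg (A : ℕ → Set ℝ) (i : ℕ) (x : ℝ) :
    Rfun A i x = -Lfun (fun j => -A j) i (-x - 1) := by
  induction i generalizing x with
  | zero => simp only [Rfun, Lfun]; ring
  | succ i ih =>
    cases i with
    | zero => simp only [Rfun, Lfun]; ring
    | succ j =>
      have hset : -{a | a ∈ -A (j + 1) ∧ Lfun (fun j => -A j) (j + 1) (-x - 1) ≤ a} =
          {a | a ∈ A (j + 1) ∧ a ≤ Rfun A (j + 1) x} := by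
        ext a
        simp only [ih, Set.mem_neg, Set.mem_ofPred_eq, neg_neg, le_neg]
      simp only [Rfun, Lfun, Real.sInf_def, hset]
      ring

theorem L_left_continuous_R_right_continuous_general (n : ℕ) (A : ℕ → Set ℝ)
    (hclosed : ∀ i, 1 ≤ i → i < n → IsClosed (A i))
    (hdense : ∀ i, 1 ≤ i → i < n → ∀ a : ℝ, (A i ∩ Set.Icc a (a + 1)).Nonempty) :
    ∀ i, 1 ≤ i → i ≤ n →
      (∀ x : ℝ, ContinuousWithinAt (Lfun A i) (Set.Iic x) x) ∧
      (∀ x : ℝ, ContinuousWithinAt (Rfun A i) (Set.Ici x) x) := by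
  intro i _ hi
  have hunbdd j h₁ h₂ := not_bddAbove_and_not_bddBelow_of_inter_Icc_nonempty (hdense j h₁ h₂)
  have hL := Lfun_monotone_and_continuousWithinAt_Iic hclosed
    (fun j h₁ h₂ => (hunbdd j h₁ h₂).1) i hi
  have hLneg := Lfun_monotone_and_continuousWithinAt_Iic (A := fun j => -A j)
    (fun j h₁ h₂ => (hclosed j h₁ h₂).neg)
    (fun j h₁ h₂ => bddAbove_neg.not.2 (hunbdd j h₁ h₂).2) i hi
  refine ⟨hL.2, fun x => ?_⟩
  have hreflect : MapsTo (fun y : ℝ => -y - 1) (Ici x) (Iic (-x - 1)) :=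
    fun y (hy : x ≤ y) => show -y - 1 ≤ -x - 1 by linarith
  simp only [funext (Rfun_eq_neg_Lfun_neg A i)]
  exact ((hLneg.2 _).comp (by fun_prop : Continuous fun y : ℝ => -y - 1).continuousWithinAt
    hreflect).neg

/-- For every `i ∈ {1,…,n}`, the function `L_i` is left continuous and the function
`R_i` is right continuous. -/
theorem L_left_continuous_R_right_continuous (n : ℕ) (hn : 1 ≤ n) (A : ℕ → Set ℝ)
    (hclosed : ∀ i, 1 ≤ i → i < n → IsClosed (A i))
    (hdense : ∀ i, 1 ≤ i → i < n → ∀ a : ℝ, (A i ∩ Set.Icc a (a + 1)).Nonempty) :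
    ∀ i, 1 ≤ i → i ≤ n →
      (∀ x : ℝ, ContinuousWithinAt (Lfun A i) (Set.Iic x) x) ∧
      (∀ x : ℝ, ContinuousWithinAt (Rfun A i) (Set.Ici x) x) :=
  L_left_continuous_R_right_continuous_general n A hclosed hdense
end

section
/- Let n ≥ 1, let A_0 = {0} and let A_1, …, A_{n−1} ⊆ ℝ be closed sets with A_i ∩ [a, a+1] ≠ ∅ for every a ∈ ℝ, and define L_h, R_h as in the recursion. Then for every x ∈ ℝ, every h ∈ {1, …, n−1}, and every point p ∈ A_h with L_h(x) ≤ p ≤ R_h(x), there exists an x-good partial transversal ending at p: elements a_0 = 0 and a_i ∈ A_i for i ∈ {1, …, h} with a_h = p and a_i − a_{i-1} ∈ [x, x+1] for every i ∈ {1, …, h}. -/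
/-!
By induction on `h`: if `p ∈ A (h+1)` lies in `[L_{h+1}(x), R_{h+1}(x)]`, it suffices to find
`q ∈ A h ∩ [L_h(x), R_h(x)]` with `p - q ∈ [x, x+1]`, and extend a transversal ending at `q`.
A point `q₀ ∈ A h ∩ [p - x - 1, p - x]` exists since `A h` meets every unit interval; if it falls
to the left of `[L_h, R_h]` then `min (A h ∩ [L_h, ∞))` does the job, if it falls to the right
then `max (A h ∩ (-∞, R_h])` does. Both extremal points lie in `[L_h, R_h]` because this interval
has length at least `1`.
-/

open Set

def MeetsEveryUnitInterval (S : Set ℝ) : Prop :=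
  ∀ a : ℝ, (S ∩ Icc a (a + 1)).Nonempty

section MeetsEveryUnitInterval

variable {S : Set ℝ}

lemma csInf_inter_Ici_mem (hc : IsClosed S) (hd : MeetsEveryUnitInterval S) (t : ℝ) :
    sInf (S ∩ Ici t) ∈ S ∩ Icc t (t + 1) := by
  obtain ⟨q, hqS, hqt, hqt'⟩ := hd t
  have hbdd : BddBelow (S ∩ Ici t) := ⟨t, fun _ hy => hy.2⟩
  have hmem := (hc.inter isClosed_Ici).csInf_mem ⟨q, hqS, hqt⟩ hbdd
  exact ⟨hmem.1, hmem.2, (csInf_le hbdd ⟨hqS, hqt⟩).trans hqt'⟩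

lemma csSup_inter_Iic_mem (hc : IsClosed S) (hd : MeetsEveryUnitInterval S) (t : ℝ) :
    sSup (S ∩ Iic t) ∈ S ∩ Icc (t - 1) t := by
  obtain ⟨q, hqS, hqt, hqt'⟩ := hd (t - 1)
  have hqt'' : q ≤ t := by linarith
  have hbdd : BddAbove (S ∩ Iic t) := ⟨t, fun _ hy => hy.2⟩
  have hmem := (hc.inter isClosed_Iic).csSup_mem ⟨q, hqS, hqt''⟩ hbdd
  exact ⟨hmem.1, hqt.trans (le_csSup hbdd ⟨hqS, hqt''⟩), hmem.2⟩

lemma exists_mem_inter_Icc_of_extremal (hd : MeetsEveryUnitInterval S) {L R ℓ r t : ℝ}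
    (hℓ : ℓ ∈ S ∩ Icc L R) (hr : r ∈ S ∩ Icc L R) (hℓt : ℓ ≤ t + 1) (htr : t ≤ r) :
    ∃ q ∈ S ∩ Icc L R, q ∈ Icc t (t + 1) := by
  obtain ⟨q, hqS, hqt, hqt'⟩ := hd t
  rcases lt_or_ge q L with hqL | hLq
  · exact ⟨ℓ, hℓ, by linarith [hℓ.2.1], hℓt⟩
  rcases le_or_gt q R with hqR | hRq
  · exact ⟨q, ⟨hqS, hLq, hqR⟩, hqt, hqt'⟩
  · exact ⟨r, hr, htr, by linarith [hr.2.2]⟩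

end MeetsEveryUnitInterval

lemma Lfun_succ_s13 (A : ℕ → Set ℝ) {h : ℕ} (hh : 1 ≤ h) (x : ℝ) :
    Lfun A (h + 1) x = x + sInf (A h ∩ Ici (Lfun A h x)) := by
  obtain ⟨i, rfl⟩ := Nat.exists_eq_add_of_le' hh
  rfl

lemma Rfun_succ_s13 (A : ℕ → Set ℝ) {h : ℕ} (hh : 1 ≤ h) (x : ℝ) :
    Rfun A (h + 1) x = x + 1 + sSup (A h ∩ Iic (Rfun A h x)) := by
  obtain ⟨i, rfl⟩ := Nat.exists_eq_add_of_le' hh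
  rfl

section Transversal

variable {A : ℕ → Set ℝ} {x : ℝ}

def IsGoodPartialTransversal (A : ℕ → Set ℝ) (x : ℝ) (h : ℕ) (a : ℕ → ℝ) : Prop :=
  a 0 = 0 ∧ (∀ i, 1 ≤ i → i ≤ h → a i ∈ A i) ∧
    ∀ i, 1 ≤ i → i ≤ h → a i - a (i - 1) ∈ Icc x (x + 1)

lemma isGoodPartialTransversal_zero : IsGoodPartialTransversal A x 0 0 :=
  ⟨rfl, fun _ _ _ => by omega, fun _ _ _ => by omega⟩

lemma IsGoodPartialTransversal.update {h : ℕ} {a : ℕ → ℝ} (ha : IsGoodPartialTransversal A x h a)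
    {p : ℝ} (hp : p ∈ A (h + 1)) (hstep : p - a h ∈ Icc x (x + 1)) :
    IsGoodPartialTransversal A x (h + 1) (Function.update a (h + 1) p) := by
  obtain ⟨ha0, haA, hadiff⟩ := ha
  refine ⟨by simpa using ha0, fun i hi1 hi => ?_, fun i hi1 hi => ?_⟩
  · rcases (Nat.le_succ_iff.mp hi) with hih | rfl
    · rw [Function.update_of_ne (by omega)]
      exact haA i hi1 hih
    · simpa using hp
  · rcases (Nat.le_succ_iff.mp hi) with hih | rfl
    · rw [Function.update_of_ne (by omega), Function.update_of_ne (by omega)]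
      exact hadiff i hi1 hih
    · simpa using hstep

end Transversal

section Endpoints

variable {n : ℕ} {A : ℕ → Set ℝ}

lemma Lfun_add_one_le_Rfun (hclosed : ∀ i, 1 ≤ i → i < n → IsClosed (A i))
    (hdense : ∀ i, 1 ≤ i → i < n → MeetsEveryUnitInterval (A i)) (x : ℝ) {h : ℕ} (h1 : 1 ≤ h)
    (hn : h < n) : Lfun A h x + 1 ≤ Rfun A h x := by
  induction h, h1 using Nat.le_induction with
  | base => simp only [Lfun, Rfun, le_refl]
  | succ h h1 ih =>
    have hℓ := csInf_inter_Ici_mem (hclosed h h1 (by omega)) (hdense h h1 (by omega)) (Lfun A h x)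
    have hℓr : sInf (A h ∩ Ici (Lfun A h x)) ≤ sSup (A h ∩ Iic (Rfun A h x)) :=
      le_csSup ⟨Rfun A h x, fun _ hy => hy.2⟩ ⟨hℓ.1, mem_Iic.mpr (by linarith [hℓ.2.2, ih (by omega)])⟩
    rw [Lfun_succ_s13 A h1, Rfun_succ_s13 A h1]
    linarith

lemma exists_isGoodPartialTransversal (hclosed : ∀ i, 1 ≤ i → i < n → IsClosed (A i))
    (hdense : ∀ i, 1 ≤ i → i < n → MeetsEveryUnitInterval (A i)) (x : ℝ) {h : ℕ} (h1 : 1 ≤ h)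
    (hn : h < n) {p : ℝ} (hp : p ∈ A h) (hL : Lfun A h x ≤ p) (hR : p ≤ Rfun A h x) :
    ∃ a, IsGoodPartialTransversal A x h a ∧ a h = p := by
  induction h, h1 using Nat.le_induction generalizing p with
  | base =>
    refine ⟨_, isGoodPartialTransversal_zero.update hp ?_, by simp⟩
    simpa [Lfun, Rfun] using And.intro hL hR
  | succ h h1 ih =>
    have hc := hclosed h h1 (by omega)
    have hd := hdense h h1 (by omega)
    have hwidth := Lfun_add_one_le_Rfun hclosed hdense x h1 (by omega)
    have hℓ := csInf_inter_Ici_mem hc hd (Lfun A h x)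
    have hr := csSup_inter_Iic_mem hc hd (Rfun A h x)
    rw [Lfun_succ_s13 A h1] at hL
    rw [Rfun_succ_s13 A h1] at hR
    obtain ⟨q, ⟨hqA, hqL, hqR⟩, hpq, hpq'⟩ := exists_mem_inter_Icc_of_extremal hd (t := p - x - 1)
      ⟨hℓ.1, hℓ.2.1, by linarith [hℓ.2.2]⟩ ⟨hr.1, by linarith [hr.2.1], hr.2.2⟩
      (by linarith) (by linarith)
    obtain ⟨a, ha, haq⟩ := ih (by omega) hqA hqL hqR
    refine ⟨_, ha.update hp ?_, by simp⟩
    rw [haq]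
    constructor <;> linarith

end Endpoints

theorem x_good_partial_transversal_general (n : ℕ) (A : ℕ → Set ℝ)
    (hclosed : ∀ i, 1 ≤ i → i < n → IsClosed (A i))
    (hdense : ∀ i, 1 ≤ i → i < n → ∀ a : ℝ, (A i ∩ Set.Icc a (a + 1)).Nonempty) :
    ∀ x : ℝ, ∀ h, 1 ≤ h → h < n → ∀ p ∈ A h,
      Lfun A h x ≤ p → p ≤ Rfun A h x →
      ∃ a : ℕ → ℝ, a 0 = 0 ∧ (∀ i, 1 ≤ i → i ≤ h → a i ∈ A i) ∧ a h = p ∧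
        ∀ i, 1 ≤ i → i ≤ h → a i - a (i - 1) ∈ Set.Icc x (x + 1) := by
  intro x h h1 hn p hp hL hR
  obtain ⟨a, ⟨ha0, haA, hadiff⟩, hap⟩ :=
    exists_isGoodPartialTransversal hclosed hdense x h1 hn hp hL hR
  exact ⟨a, ha0, haA, hap, hadiff⟩

/-- If `p ∈ A h` lies in the interval `J_h(x) = [L_h(x), R_h(x)]` with
`1 ≤ h ≤ n−1`, then there is an `x`-good partial transversal ending at `p`:
points `a 0 = 0`, `a i ∈ A i` for `i ∈ {1,…,h}`, with `a h = p` and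
`a i − a (i−1) ∈ [x, x+1]` for every `i ∈ {1,…,h}`. -/
theorem x_good_partial_transversal (n : ℕ) (hn : 1 ≤ n) (A : ℕ → Set ℝ)
    (hA0 : A 0 = {0})
    (hclosed : ∀ i, 1 ≤ i → i < n → IsClosed (A i))
    (hdense : ∀ i, 1 ≤ i → i < n → ∀ a : ℝ, (A i ∩ Set.Icc a (a + 1)).Nonempty) :
    ∀ x : ℝ, ∀ h, 1 ≤ h → h < n → ∀ p ∈ A h,
      Lfun A h x ≤ p → p ≤ Rfun A h x →
      ∃ a : ℕ → ℝ, a 0 = 0 ∧ (∀ i, 1 ≤ i → i ≤ h → a i ∈ A i) ∧ a h = p ∧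
        ∀ i, 1 ≤ i → i ≤ h → a i - a (i - 1) ∈ Set.Icc x (x + 1) :=
  x_good_partial_transversal_general n A hclosed hdense
end
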